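/- Let β > 0. Then there exist λ ∈ ℝ and φ ∈ ℝⁿ with φ_i > 0 for all i such that D φ + β φ³ = λ φ and h · φᵀφ = 1; moreover the pair (λ, φ) with these properties is unique. -/

import Mathlib

/-!
Minimize `E x = xᵀ D x + β/2 ∑ xᵢ⁴` on the compact set `h ∑ xᵢ² = 1`. Since `D` has nonpositive
off-diagonal entries, `E |x| ≤ E x`, so there is a nonnegative minimizer, and its Euler–Lagrange
equation is the eigen-equation with `λ = h (xᵀ D x + β ∑ xᵢ⁴)`. At a zero entry the equation forces
both neighbours to vanish (`D j (j ± 1) < 0`), so the minimizer is positive.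

For uniqueness, the discrete Picone inequality `∑ (φᵢ² - ψᵢ²) ((Dφ)ᵢ/φᵢ - (Dψ)ᵢ/ψᵢ) ≥ 0` for
positive `φ, ψ` becomes `-β ∑ (φᵢ² - ψᵢ²)² ≥ 0` once the equations and `∑ φᵢ² = ∑ ψᵢ²` are inserted.
-/

open Finset Matrix

section

variable {ι : Type*} [Fintype ι]

noncomputable def gpEnergy (D : Matrix ι ι ℝ) (β : ℝ) (x : ι → ℝ) : ℝ :=
  x ⬝ᵥ D *ᵥ x + β / 2 * ∑ i, x i ^ 4

lemma Matrix.IsSymm.dotProduct_mulVec_comm {D : Matrix ι ι ℝ} (hD : D.IsSymm) (x y : ι → ℝ) :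
    x ⬝ᵥ D *ᵥ y = y ⬝ᵥ D *ᵥ x := by
  rw [dotProduct_mulVec, dotProduct_comm, ← vecMul_transpose, hD]

lemma Matrix.IsSymm.dotProduct_mulVec_add_smul {D : Matrix ι ι ℝ} (hD : D.IsSymm)
    (x v : ι → ℝ) (t : ℝ) :
    (x + t • v) ⬝ᵥ D *ᵥ (x + t • v)
      = x ⬝ᵥ D *ᵥ x + t * (2 * (v ⬝ᵥ D *ᵥ x)) + t ^ 2 * (v ⬝ᵥ D *ᵥ v) := by
  simp only [mulVec_add, mulVec_smul, add_dotProduct, dotProduct_add, smul_dotProduct,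
    dotProduct_smul, smul_eq_mul, hD.dotProduct_mulVec_comm x v]
  ring

lemma hasDerivAt_quadratic (a b c : ℝ) : HasDerivAt (fun t => a + t * b + t ^ 2 * c) b 0 := by
  simpa using ((hasDerivAt_mul_const b).const_add a).fun_add ((hasDerivAt_pow 2 0).mul_const c)

lemma Matrix.IsSymm.hasDerivAt_dotProduct_mulVec_line {D : Matrix ι ι ℝ} (hD : D.IsSymm)
    (x v : ι → ℝ) :
    HasDerivAt (fun t : ℝ => (x + t • v) ⬝ᵥ D *ᵥ (x + t • v)) (2 * (v ⬝ᵥ D *ᵥ x)) 0 := by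
  simp only [hD.dotProduct_mulVec_add_smul]
  exact hasDerivAt_quadratic _ _ _

lemma hasDerivAt_sum_pow_line (x v : ι → ℝ) (k : ℕ) :
    HasDerivAt (fun t : ℝ => ∑ i, (x + t • v) i ^ k) (k * ∑ i, x i ^ (k - 1) * v i) 0 := by
  rw [mul_sum]
  refine HasDerivAt.fun_sum fun i _ => ?_
  simpa [mul_assoc] using ((hasDerivAt_mul_const (x := 0) (v i)).const_add (x i)).fun_pow k

lemma gpEnergy_smul (D : Matrix ι ι ℝ) (β c : ℝ) (x : ι → ℝ) :
    gpEnergy D β (c • x) = c ^ 2 * (x ⬝ᵥ D *ᵥ x) + c ^ 4 * (β / 2 * ∑ i, x i ^ 4) := by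
  simp only [gpEnergy, mulVec_smul, smul_dotProduct, dotProduct_smul, smul_eq_mul,
    Pi.smul_apply, mul_pow, ← mul_sum]
  ring

lemma gpEnergy_abs_le {D : Matrix ι ι ℝ} (hoff : ∀ i j, i ≠ j → D i j ≤ 0) (β : ℝ)
    (x : ι → ℝ) : gpEnergy D β |x| ≤ gpEnergy D β x := by
  have hquart : ∑ i, |x| i ^ 4 = ∑ i, x i ^ 4 := by
    simp [Pi.abs_apply, Even.pow_abs (by decide : Even 4)]
  have hquad : |x| ⬝ᵥ D *ᵥ |x| ≤ x ⬝ᵥ D *ᵥ x := by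
    simp only [dotProduct, mulVec, mul_sum, Pi.abs_apply]
    refine sum_le_sum fun i _ => sum_le_sum fun j _ => ?_
    rcases eq_or_ne i j with rfl | hij
    · exact le_of_eq (by linear_combination D i i * abs_mul_abs_self (x i))
    · have := mul_le_mul_of_nonpos_left (le_abs_self (x i * x j)) (hoff i j hij)
      rw [abs_mul] at this
      linarith
  unfold gpEnergy
  rw [hquart]
  linarith

variable {D : Matrix ι ι ℝ} {β h : ℝ} {φ : ι → ℝ}

-- `E φ ≤ E (y / √N)` for `N = h ∑ yᵢ²`, times `N²`; by homogeneity it also holds at `y = 0`.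
lemma gpEnergy_le_homogenized (hh : 0 < h)
    (hmin : ∀ x : ι → ℝ, h * ∑ i, x i ^ 2 = 1 → gpEnergy D β φ ≤ gpEnergy D β x)
    (y : ι → ℝ) :
    gpEnergy D β φ * (h * ∑ i, y i ^ 2) ^ 2
      ≤ (y ⬝ᵥ D *ᵥ y) * (h * ∑ i, y i ^ 2) + β / 2 * ∑ i, y i ^ 4 := by
  set N := h * ∑ i, y i ^ 2 with hN
  rcases (show 0 ≤ N by positivity).eq_or_lt with hN0 | hNpos
  · have hsum : ∑ i, y i ^ 2 = 0 := (mul_eq_zero.1 hN0.symm).resolve_left hh.ne'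
    have hy : y = 0 := funext fun i => pow_eq_zero_iff two_ne_zero |>.1 <|
      (sum_eq_zero_iff_of_nonneg fun i _ => sq_nonneg (y i)).1 hsum i (mem_univ i)
    simp [← hN0, hy]
  · set c := (√N)⁻¹
    have hc2 : c ^ 2 = N⁻¹ := by rw [inv_pow, Real.sq_sqrt hNpos.le]
    have hcy : h * ∑ i, (c • y) i ^ 2 = 1 := by
      simp only [Pi.smul_apply, smul_eq_mul, mul_pow, ← mul_sum, hc2]
      rw [mul_left_comm, ← hN, inv_mul_cancel₀ hNpos.ne']
    have hle := hmin _ hcy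
    rw [gpEnergy_smul, show c ^ 4 = (c ^ 2) ^ 2 by ring, hc2] at hle
    have := mul_le_mul_of_nonneg_right hle (sq_nonneg N)
    field_simp at this
    linarith

theorem gpEnergy_eulerLagrange (hD : D.IsSymm) (hh : 0 < h) (hφ : h * ∑ i, φ i ^ 2 = 1)
    (hmin : ∀ x : ι → ℝ, h * ∑ i, x i ^ 2 = 1 → gpEnergy D β φ ≤ gpEnergy D β x) :
    D *ᵥ φ + β • (fun i => φ i ^ 3) = (h * (φ ⬝ᵥ D *ᵥ φ + β * ∑ i, φ i ^ 4)) • φ := by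
  set μ := h * (φ ⬝ᵥ D *ᵥ φ + β * ∑ i, φ i ^ 4)
  set r := D *ᵥ φ + β • (fun i => φ i ^ 3) - μ • φ
  rw [← sub_eq_zero, ← dotProduct_self_eq_zero]
  -- `k` vanishes at `t = 0` and is nonnegative, so its derivative `2 r ⬝ᵥ r` there vanishes.
  set k : ℝ → ℝ := fun t =>
    ((φ + t • r) ⬝ᵥ D *ᵥ (φ + t • r)) * (h * ∑ i, (φ + t • r) i ^ 2)
      + β / 2 * ∑ i, (φ + t • r) i ^ 4 - gpEnergy D β φ * (h * ∑ i, (φ + t • r) i ^ 2) ^ 2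
  have hk0 : k 0 = 0 := by simp [k, hφ, gpEnergy]
  have hmin0 : IsLocalMin k 0 := Filter.Eventually.of_forall fun t => by
    rw [hk0]; exact sub_nonneg.2 (gpEnergy_le_homogenized hh hmin (φ + t • r))
  have hQ := hD.hasDerivAt_dotProduct_mulVec_line φ r
  have hN := (hasDerivAt_sum_pow_line φ r 2).const_mul h
  have hF := hasDerivAt_sum_pow_line φ r 4
  have hk := ((hQ.mul hN).add (hF.const_mul (β / 2))).sub ((hN.pow 2).const_mul (gpEnergy D β φ))
  have hderiv := hmin0.hasDerivAt_eq_zero hk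
  simp only [zero_smul, add_zero, hφ] at hderiv
  have hrr : r ⬝ᵥ r = r ⬝ᵥ D *ᵥ φ + β * ∑ i, φ i ^ 3 * r i - μ * ∑ i, φ i * r i := by
    simp only [dotProduct, mul_sum, ← sum_add_distrib, ← sum_sub_distrib]
    refine sum_congr rfl fun i _ => ?_
    simp only [r, Pi.sub_apply, Pi.add_apply, Pi.smul_apply, smul_eq_mul]
    ring
  norm_num [gpEnergy] at hderiv
  rw [hrr]
  linear_combination hderiv / 2

lemma exists_gpEnergy_min [Nonempty ι] (D : Matrix ι ι ℝ) (β : ℝ) (hh : 0 < h) :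
    ∃ φ : ι → ℝ, h * ∑ i, φ i ^ 2 = 1 ∧
      ∀ x : ι → ℝ, h * ∑ i, x i ^ 2 = 1 → gpEnergy D β φ ≤ gpEnergy D β x := by
  set S : Set (ι → ℝ) := {x | h * ∑ i, x i ^ 2 = 1}
  have hclosed : IsClosed S := isClosed_eq (by fun_prop) continuous_const
  have hbdd : Bornology.IsBounded S := by
    refine isBounded_iff_forall_norm_le.2 ⟨√(1 / h), fun x hx => ?_⟩
    refine (pi_norm_le_iff_of_nonneg (Real.sqrt_nonneg _)).2 fun i => ?_
    rw [Real.norm_eq_abs]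
    refine Real.abs_le_sqrt ?_
    rw [le_div_iff₀ hh, mul_comm, ← hx]
    gcongr
    exact single_le_sum (fun j _ => sq_nonneg (x j)) (mem_univ i)
  have hne : S.Nonempty := by
    refine ⟨fun _ => √(1 / (h * Fintype.card ι)), ?_⟩
    have : 0 < h * Fintype.card ι := by positivity
    simp only [S, Set.mem_ofPred_eq, Real.sq_sqrt (one_div_pos.2 this).le, sum_const, card_univ,
      nsmul_eq_mul]
    field_simp
  have hcont : Continuous (gpEnergy D β) := by
    unfold gpEnergy; simp only [dotProduct, mulVec]; fun_prop
  obtain ⟨φ, hφS, hφmin⟩ :=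
    (Metric.isCompact_of_isClosed_isBounded hclosed hbdd).exists_isMinOn hne hcont.continuousOn
  exact ⟨φ, hφS, fun x hx => hφmin hx⟩

lemma picone_pair_nonpos {a b c d : ℝ} (ha : 0 < a) (hb : 0 < b) (hc : 0 < c) (hd : 0 < d) :
    (a ^ 2 - c ^ 2) * (b / a - d / c) + (b ^ 2 - d ^ 2) * (a / b - c / d) ≤ 0 := by
  have key : (a ^ 2 - c ^ 2) * (b / a - d / c) + (b ^ 2 - d ^ 2) * (a / b - c / d)
      = -((a * d - b * c) ^ 2 * (1 / (a * b) + 1 / (c * d))) := by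
    field_simp
    ring
  rw [key, neg_nonpos]
  positivity

theorem picone_sum_nonneg (hD : D.IsSymm) (hoff : ∀ i j, i ≠ j → D i j ≤ 0) {φ ψ : ι → ℝ}
    (hφ : ∀ i, 0 < φ i) (hψ : ∀ i, 0 < ψ i) :
    0 ≤ ∑ i, (φ i ^ 2 - ψ i ^ 2) * ((D *ᵥ φ) i / φ i - (D *ᵥ ψ) i / ψ i) := by
  set T : ι → ι → ℝ := fun i j => D i j * ((φ i ^ 2 - ψ i ^ 2) * (φ j / φ i - ψ j / ψ i))
  have hexpand : ∑ i, (φ i ^ 2 - ψ i ^ 2) * ((D *ᵥ φ) i / φ i - (D *ᵥ ψ) i / ψ i)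
      = ∑ i, ∑ j, T i j := by
    refine sum_congr rfl fun i _ => ?_
    simp only [mulVec, dotProduct, sum_div, ← sum_sub_distrib, mul_sum, T]
    exact sum_congr rfl fun j _ => by ring
  have hpair : ∀ i j, 0 ≤ T i j + T j i := by
    intro i j
    rcases eq_or_ne i j with rfl | hij
    · simp [T, div_self (hφ i).ne', div_self (hψ i).ne']
    · have : T i j + T j i = D i j * ((φ i ^ 2 - ψ i ^ 2) * (φ j / φ i - ψ j / ψ i)
          + (φ j ^ 2 - ψ j ^ 2) * (φ i / φ j - ψ i / ψ j)) := by
        simp only [T, hD.apply i j]; ring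
      rw [this]
      exact mul_nonneg_of_nonpos_of_nonpos (hoff i j hij)
        (picone_pair_nonpos (hφ i) (hφ j) (hψ i) (hψ j))
  have hsymm : 2 * ∑ i, ∑ j, T i j = ∑ i, ∑ j, (T i j + T j i) := by
    simp only [sum_add_distrib, two_mul]
    rw [sum_comm (f := fun j i => T i j)]
  rw [hexpand]
  linarith [sum_nonneg fun i (_ : i ∈ univ) => sum_nonneg fun j (_ : j ∈ univ) => hpair i j]

theorem eq_of_gp_eigenvector (hD : D.IsSymm) (hoff : ∀ i j, i ≠ j → D i j ≤ 0) (hβ : 0 < β)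
    {φ ψ : ι → ℝ} {μφ μψ : ℝ} (hφ : ∀ i, 0 < φ i) (hψ : ∀ i, 0 < ψ i)
    (heφ : D *ᵥ φ + β • (fun i => φ i ^ 3) = μφ • φ)
    (heψ : D *ᵥ ψ + β • (fun i => ψ i ^ 3) = μψ • ψ)
    (hnorm : ∑ i, φ i ^ 2 = ∑ i, ψ i ^ 2) : φ = ψ := by
  have hratio : ∀ {χ : ι → ℝ} {μ : ℝ}, (∀ i, 0 < χ i) →
      D *ᵥ χ + β • (fun i => χ i ^ 3) = μ • χ → ∀ i, (D *ᵥ χ) i / χ i = μ - β * χ i ^ 2 := by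
    intro χ μ hχ he i
    have := congrFun he i
    simp only [Pi.add_apply, Pi.smul_apply, smul_eq_mul] at this
    field_simp [(hχ i).ne']
    linear_combination this
  have hsum : ∑ i, (φ i ^ 2 - ψ i ^ 2) * ((D *ᵥ φ) i / φ i - (D *ᵥ ψ) i / ψ i)
      = -(β * ∑ i, (φ i ^ 2 - ψ i ^ 2) ^ 2) := by
    simp only [hratio hφ heφ, hratio hψ heψ]
    have hmass : ∑ i, (φ i ^ 2 - ψ i ^ 2) = 0 := by rw [sum_sub_distrib, hnorm, sub_self]
    calc ∑ i, (φ i ^ 2 - ψ i ^ 2) * (μφ - β * φ i ^ 2 - (μψ - β * ψ i ^ 2))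
        = ∑ i, ((μφ - μψ) * (φ i ^ 2 - ψ i ^ 2) - β * (φ i ^ 2 - ψ i ^ 2) ^ 2) :=
          sum_congr rfl fun i _ => by ring
      _ = -(β * ∑ i, (φ i ^ 2 - ψ i ^ 2) ^ 2) := by
          rw [sum_sub_distrib, ← mul_sum, ← mul_sum, hmass]; ring
  have hzero : ∑ i, (φ i ^ 2 - ψ i ^ 2) ^ 2 = 0 := by
    have := picone_sum_nonneg hD hoff hφ hψ
    rw [hsum] at this
    have : 0 ≤ ∑ i, (φ i ^ 2 - ψ i ^ 2) ^ 2 := sum_nonneg fun i _ => sq_nonneg _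
    nlinarith
  ext i
  have hi := (sum_eq_zero_iff_of_nonneg fun i _ => sq_nonneg (φ i ^ 2 - ψ i ^ 2)).1 hzero i
    (mem_univ i)
  rw [sq_eq_zero_iff, sub_eq_zero] at hi
  exact (pow_left_inj₀ (hφ i).le (hψ i).le two_ne_zero).1 hi

lemma apply_eq_zero_of_mulVec_apply_nonneg (hoff : ∀ i j, i ≠ j → D i j ≤ 0) {ψ : ι → ℝ}
    (hψ : 0 ≤ ψ) {j l : ι} (hj : ψ j = 0) (hDψ : 0 ≤ (D *ᵥ ψ) j) (hjl : D j l < 0) :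
    ψ l = 0 := by
  have hterm : ∀ m ∈ univ, D j m * ψ m ≤ 0 := fun m _ => by
    rcases eq_or_ne j m with rfl | hjm
    · simp [hj]
    · exact mul_nonpos_of_nonpos_of_nonneg (hoff j m hjm) (hψ m)
  have hsum : ∑ m, D j m * ψ m = 0 := le_antisymm (sum_nonpos hterm) hDψ
  have := (sum_eq_zero_iff_of_nonpos hterm).1 hsum l (mem_univ l)
  exact (mul_eq_zero.1 this).resolve_left hjl.ne

end

lemma Fin.iff_of_iff_succ {n : ℕ} {P : Fin n → Prop}
    (hP : ∀ i j : Fin n, (j : ℕ) = i + 1 → (P i ↔ P j)) (i j : Fin n) : P i ↔ P j := by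
  have hbase : ∀ k (hk : k < n), P ⟨k, hk⟩ ↔ P ⟨0, by omega⟩ := by
    intro k
    induction k with
    | zero => exact fun _ => Iff.rfl
    | succ k ih => exact fun hk => (hP ⟨k, by omega⟩ ⟨k + 1, hk⟩ rfl).symm.trans (ih _)
  exact (hbase i i.2).trans (hbase j j.2).symm

theorem pos_of_gp_eigenvector {n : ℕ} {D : Matrix (Fin n) (Fin n) ℝ} {β μ : ℝ}
    (hoff : ∀ i j, i ≠ j → D i j ≤ 0)
    (hadj : ∀ i j : Fin n, (j : ℕ) = i + 1 → D i j < 0 ∧ D j i < 0)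
    {ψ : Fin n → ℝ} (hψ : 0 ≤ ψ) (hψ0 : ψ ≠ 0)
    (he : D *ᵥ ψ + β • (fun i => ψ i ^ 3) = μ • ψ) (i : Fin n) : 0 < ψ i := by
  have hzero : ∀ j, ψ j = 0 → 0 ≤ (D *ᵥ ψ) j := fun j hj => by
    have := congrFun he j
    simp only [Pi.add_apply, Pi.smul_apply, smul_eq_mul, hj] at this
    norm_num at this
    exact this.ge
  have hiff : ∀ j l, ψ j = 0 ↔ ψ l = 0 := Fin.iff_of_iff_succ fun j l hjl =>
    ⟨fun hj => apply_eq_zero_of_mulVec_apply_nonneg hoff hψ hj (hzero j hj) (hadj j l hjl).1,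
     fun hl => apply_eq_zero_of_mulVec_apply_nonneg hoff hψ hl (hzero l hl) (hadj j l hjl).2⟩
  obtain ⟨m, hm⟩ : ∃ m, ψ m ≠ 0 := by
    by_contra! hall
    exact hψ0 (funext hall)
  exact (hψ i).lt_of_ne fun hi => hm ((hiff i m).1 hi.symm)

section Stencil

variable {n : ℕ} {h : ℝ} {D : Matrix (Fin n) (Fin n) ℝ}

lemma Fin.abs_sub_eq_one_or_two_le {i j : Fin n} (hij : i ≠ j) :
    |(i : ℤ) - (j : ℤ)| = 1 ∨ 2 ≤ |(i : ℤ) - (j : ℤ)| := by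
  have : (i : ℤ) ≠ j := fun h => hij (Fin.ext (by exact_mod_cast h))
  rcases abs_cases ((i : ℤ) - j) with ⟨habs, _⟩ | ⟨habs, _⟩ <;> rw [habs] <;> omega

lemma isSymm_of_stencil
    (hDoff : ∀ i j : Fin n, |(i : ℤ) - (j : ℤ)| = 1 → D i j = -(1 / (2 * h ^ 2)))
    (hDzero : ∀ i j : Fin n, 2 ≤ |(i : ℤ) - (j : ℤ)| → D i j = 0) : D.IsSymm := by
  refine IsSymm.ext fun i j => ?_
  rcases eq_or_ne i j with rfl | hij
  · rfl
  rcases Fin.abs_sub_eq_one_or_two_le hij with h1 | h2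
  · rw [hDoff i j h1, hDoff j i (by rwa [abs_sub_comm])]
  · rw [hDzero i j h2, hDzero j i (by rwa [abs_sub_comm])]

lemma offDiag_nonpos_of_stencil
    (hDoff : ∀ i j : Fin n, |(i : ℤ) - (j : ℤ)| = 1 → D i j = -(1 / (2 * h ^ 2)))
    (hDzero : ∀ i j : Fin n, 2 ≤ |(i : ℤ) - (j : ℤ)| → D i j = 0) (i j : Fin n) (hij : i ≠ j) :
    D i j ≤ 0 := by
  rcases Fin.abs_sub_eq_one_or_two_le hij with h1 | h2
  · rw [hDoff i j h1, neg_nonpos]; positivity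
  · rw [hDzero i j h2]

lemma succ_neg_of_stencil (hh : 0 < h)
    (hDoff : ∀ i j : Fin n, |(i : ℤ) - (j : ℤ)| = 1 → D i j = -(1 / (2 * h ^ 2)))
    (i j : Fin n) (hij : (j : ℕ) = i + 1) : D i j < 0 ∧ D j i < 0 := by
  have hneg : -(1 / (2 * h ^ 2)) < 0 := neg_neg_of_pos (by positivity)
  have hji : (j : ℤ) - i = 1 := by omega
  exact ⟨hDoff i j (by rw [abs_sub_comm, hji, abs_one]) ▸ hneg,
    hDoff j i (by rw [hji, abs_one]) ▸ hneg⟩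

end Stencil

theorem stmt_6 (n : ℕ) (hn : 1 ≤ n) (h : ℝ) (hh : 0 < h)
    (D : Matrix (Fin n) (Fin n) ℝ)
    (hDoff : ∀ i j : Fin n, |(i : ℤ) - (j : ℤ)| = 1 → D i j = -(1 / (2 * h ^ 2)))
    (hDzero : ∀ i j : Fin n, 2 ≤ |(i : ℤ) - (j : ℤ)| → D i j = 0)
    (β : ℝ) (hβ : 0 < β) :
    ∃! p : ℝ × (Fin n → ℝ), (∀ i, 0 < p.2 i) ∧
      D.mulVec p.2 + β • (fun i => p.2 i ^ 3) = p.1 • p.2 ∧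
      h * (∑ i, p.2 i ^ 2) = 1 := by
  have hsymm := isSymm_of_stencil hDoff hDzero
  have hoff := offDiag_nonpos_of_stencil hDoff hDzero
  have : Nonempty (Fin n) := ⟨⟨0, hn⟩⟩
  obtain ⟨φ, hφS, hφmin⟩ := exists_gpEnergy_min D β hh
  have hψS : h * ∑ i, |φ| i ^ 2 = 1 := by simpa [Pi.abs_apply] using hφS
  have heq := gpEnergy_eulerLagrange hsymm hh hψS fun x hx =>
    (gpEnergy_abs_le hoff β φ).trans (hφmin x hx)
  have hne : |φ| ≠ 0 := by rintro h0; rw [h0] at hψS; simp at hψS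
  have hpos := pos_of_gp_eigenvector hoff (succ_neg_of_stencil hh hDoff) (abs_nonneg φ) hne heq
  refine ⟨(_, |φ|), ⟨hpos, heq, hψS⟩, ?_⟩
  rintro ⟨μ, χ⟩ ⟨hχpos, hχeq, hχS⟩
  obtain rfl : χ = |φ| := eq_of_gp_eigenvector hsymm hoff hβ hχpos hpos hχeq heq
    (mul_left_cancel₀ hh.ne' (hχS.trans hψS.symm))
  exact Prod.ext (smul_left_injective ℝ hne (hχeq.symm.trans heq)) rfl
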